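/- arXiv:2510.17582 — 5 statements merged into one kernel-verified Lean document; each statement's English description precedes it below -/
import Mathlib

section
/- Let (N, m0, l, A) be a bounded labeled Petri net system whose label alphabet is partitioned as A = A_L ∪ A_H, such that the T_H-induced subnet is acyclic, and let G be the basis reachability graph of (N, m0, l, A) with the low-level transitions T_L playing the role of explicit transitions and the high-level transitions T_H the role of implicit transitions. Then the LPNS is SNNI if and only if for every sequence s ∈ φ(L(G)) there exists a sequence s' ∈ L(N_L, m0) such that l(s) = l_L(s'). -/
open scoped BigOperators

/-- A Petri net on places `P` and transitions `T`, given by its `Pre` and `Post` matrices. -/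
structure PetriNet (P T : Type) where
  Pre : P → T → ℕ
  Post : P → T → ℕ

namespace PetriNet

variable {P T A : Type}

/-- Incidence matrix `[N] = Post - Pre` (with values in ℤ). -/
def inc (N : PetriNet P T) (p : P) (t : T) : ℤ :=
  (N.Post p t : ℤ) - (N.Pre p t : ℤ)

/-- Transition `t` is enabled at marking `m`. -/
def enabled (N : PetriNet P T) (m : P → ℕ) (t : T) : Prop :=
  ∀ p, N.Pre p t ≤ m p

/-- Marking obtained by firing `t` at `m`. -/
def fire (N : PetriNet P T) (m : P → ℕ) (t : T) : P → ℕ :=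
  fun p => m p - N.Pre p t + N.Post p t

/-- `FireSeq N m s m'` means the sequence `s` is enabled at `m` and its firing yields `m'`,
written `m[s⟩m'`. -/
inductive FireSeq (N : PetriNet P T) : (P → ℕ) → List T → (P → ℕ) → Prop
  | nil (m : P → ℕ) : FireSeq N m [] m
  | cons {m m' : P → ℕ} {t : T} {s : List T} :
      N.enabled m t → FireSeq N (N.fire m t) s m' → FireSeq N m (t :: s) m'

/-- `L(N, m0)`: the set of firing sequences enabled at `m0`. -/
def lang (N : PetriNet P T) (m0 : P → ℕ) : Set (List T) :=
  {s | ∃ m', N.FireSeq m0 s m'}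

/-- `R(N, m0)`: the set of markings reachable from `m0`. -/
def reach (N : PetriNet P T) (m0 : P → ℕ) : Set (P → ℕ) :=
  {m | ∃ s, N.FireSeq m0 s m}

/-- A Petri net system is bounded if reachable markings are uniformly bounded. -/
def Bounded (N : PetriNet P T) (m0 : P → ℕ) : Prop :=
  ∃ k : ℕ, ∀ m ∈ N.reach m0, ∀ p, m p ≤ k

/-- The `TL`-induced subnet: same places, transitions restricted to `TL`. -/
def restrict (N : PetriNet P T) (TL : Set T) : PetriNet P {t // t ∈ TL} where
  Pre := fun p t => N.Pre p t.1
  Post := fun p t => N.Post p t.1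

/-- Parikh vector of a sequence. -/
def parikh [DecidableEq T] (s : List T) : T → ℕ := fun t => s.count t

/-- Projection of a sequence onto a subset `TL` of transitions (erasing the others). -/
def projSeq (TL : Set T) [DecidablePred (· ∈ TL)] (s : List T) : List T :=
  s.filter (fun t => decide (t ∈ TL))

/-- Σ(m,t): explanations of `t` at `m`, i.e. sequences of implicit (`TI`) transitions whose
firing at `m` enables `t`. -/
def explanations (N : PetriNet P T) (TI : Set T) (m : P → ℕ) (t : T) : Set (List T) :=
  {s | (∀ u ∈ s, u ∈ TI) ∧ ∃ m', N.FireSeq m s m' ∧ N.enabled m' t}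

/-- Y(m,t): e-vectors, Parikh vectors of explanations. -/
def eVectors [DecidableEq T] (N : PetriNet P T) (TI : Set T) (m : P → ℕ) (t : T) :
    Set (T → ℕ) :=
  parikh '' N.explanations TI m t

/-- Y_min(m,t): componentwise-minimal e-vectors. -/
def eVectorsMin [DecidableEq T] (N : PetriNet P T) (TI : Set T) (m : P → ℕ) (t : T) :
    Set (T → ℕ) :=
  {y ∈ N.eVectors TI m t | ∀ y' ∈ N.eVectors TI m t, y' ≤ y → y' = y}

/-- Σ_min(m,t): explanations with no explanation of strictly smaller Parikh vector. -/
def explanationsMin [DecidableEq T] (N : PetriNet P T) (TI : Set T) (m : P → ℕ) (t : T) :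
    Set (List T) :=
  {s ∈ N.explanations TI m t |
    ¬ ∃ s' ∈ N.explanations TI m t, parikh s' ≤ parikh s ∧ parikh s' ≠ parikh s}

/-- Paths of the basis reachability graph: `(m,(t,y),m')` is an arc whenever `t ∈ TE`,
`y ∈ Y_min(m,t)` and `m' = m + [N]_I·y + [N](·,t)` (the vector `y` is supported on `TI`,
so the sum over all transitions equals the sum over `TI`). -/
inductive BrgPath [DecidableEq T] [Fintype T] (N : PetriNet P T) (TE TI : Set T) :
    (P → ℕ) → List (T × (T → ℕ)) → (P → ℕ) → Prop
  | nil (m : P → ℕ) : BrgPath N TE TI m [] m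
  | cons {m m' m'' : P → ℕ} {t : T} {y : T → ℕ} {σ : List (T × (T → ℕ))} :
      t ∈ TE → y ∈ N.eVectorsMin TI m t →
      (∀ p, (m' p : ℤ) = (m p : ℤ) + (∑ u, (y u : ℤ) * N.inc p u) + N.inc p t) →
      BrgPath N TE TI m' σ m'' → BrgPath N TE TI m ((t, y) :: σ) m''

/-- `L(G)`: the language of the basis reachability graph. -/
def brgLang [DecidableEq T] [Fintype T] (N : PetriNet P T) (TE TI : Set T) (m0 : P → ℕ) :
    Set (List (T × (T → ℕ))) :=
  {σ | ∃ m', BrgPath N TE TI m0 σ m'}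

/-- The set of basis markings: states of the BRG reachable from `m0`. -/
def brgStates [DecidableEq T] [Fintype T] (N : PetriNet P T) (TE TI : Set T) (m0 : P → ℕ) :
    Set (P → ℕ) :=
  {m | ∃ σ, BrgPath N TE TI m0 σ m}

/-- φ(σ): concatenation of the first entries of the arcs of σ. -/
def phi (σ : List (T × (T → ℕ))) : List T := σ.map Prod.fst

/-- φ'(σ): sum of the second entries of the arcs of σ. -/
def phi' (σ : List (T × (T → ℕ))) : T → ℕ := (σ.map Prod.snd).sum

/-- Arcs of the directed bipartite graph of the `TI`-induced subnet on `P ⊕ T`. -/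
def subnetArc (N : PetriNet P T) (TI : Set T) : (P ⊕ T) → (P ⊕ T) → Prop
  | Sum.inl p, Sum.inr t => t ∈ TI ∧ 0 < N.Pre p t
  | Sum.inr t, Sum.inl p => t ∈ TI ∧ 0 < N.Post p t
  | _, _ => False

/-- The `TI`-induced subnet is acyclic: no cycle in its directed bipartite graph. -/
def SubnetAcyclic (N : PetriNet P T) (TI : Set T) : Prop :=
  ∀ x : P ⊕ T, ¬ Relation.TransGen (N.subnetArc TI) x x

/-- `L(N_L, m0)` viewed as a set of sequences over `T` (via the inclusion `T_L ↪ T`). -/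
def lowLang (N : PetriNet P T) (TL : Set T) (m0 : P → ℕ) : Set (List T) :=
  (fun s => s.map Subtype.val) '' (N.restrict TL).lang m0

/-- `l_L(L(N_L, m0))`: the label language of the low-level subnet system. -/
def lowLabelLang (N : PetriNet P T) (l : T → A) (TL : Set T) (m0 : P → ℕ) : Set (List A) :=
  (fun s => s.map fun t => l t.1) '' (N.restrict TL).lang m0

/-- SNNI: `l(P_L(L(N,m0))) = l_L(L(N_L,m0))`, where `T_L = {t | l t ∈ A_L}`. -/
def SNNI (N : PetriNet P T) (m0 : P → ℕ) (l : T → A) (AL : Set A)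
    [DecidablePred fun t => l t ∈ AL] : Prop :=
  (fun s => (s.filter fun t => decide (l t ∈ AL)).map l) '' N.lang m0 =
    N.lowLabelLang l {t | l t ∈ AL} m0

end PetriNet

/-!
A BRG arc `(t, y)` unfolds into an explanation of `t` with Parikh vector `y` followed by `t`, so
every BRG path is realised by a firing sequence whose low-level projection is `φ(σ)`; this gives
`⇒`. Conversely, every low-level projection of a firing sequence lies in `φ(L(G))`: before each
low-level transition `t`, replace the high-level prefix `w` by a minimal explanation `w₀` with
`π(w₀) ≤ π(w)`, fire `t`, and then fire the leftover vector `π(w) - π(w₀)`. The last step works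
because in an acyclic net every nonnegative solution of the state equation is firable: some
transition of the support has no input place fed by the support, and it is enabled. Together with
the inclusion `l_L(L(N_L, m0)) ⊆ l(P_L(L(N, m0)))`, which always holds, this gives `⇐`.
-/

namespace PetriNet

variable {P T : Type} {N : PetriNet P T}

theorem FireSeq.append {m m₁ m' : P → ℕ} {s₁ s₂ : List T}
    (h₁ : N.FireSeq m s₁ m₁) (h₂ : N.FireSeq m₁ s₂ m') : N.FireSeq m (s₁ ++ s₂) m' := by
  induction h₁ with
  | nil => exact h₂
  | cons he _ ih => exact .cons he (ih h₂)

theorem fireSeq_append_iff {m m' : P → ℕ} {s₁ s₂ : List T} :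
    N.FireSeq m (s₁ ++ s₂) m' ↔ ∃ m₁, N.FireSeq m s₁ m₁ ∧ N.FireSeq m₁ s₂ m' := by
  refine ⟨fun h => ?_, fun ⟨_, h₁, h₂⟩ => h₁.append h₂⟩
  induction s₁ generalizing m with
  | nil => exact ⟨m, .nil m, h⟩
  | cons t s ih =>
    cases h with
    | cons he h =>
      obtain ⟨m₁, h₁, h₂⟩ := ih h
      exact ⟨m₁, .cons he h₁, h₂⟩

theorem fireSeq_singleton_iff {m m' : P → ℕ} {t : T} :
    N.FireSeq m [t] m' ↔ N.enabled m t ∧ N.fire m t = m' := by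
  constructor
  · rintro (_ | ⟨he, (_ | _)⟩)
    exact ⟨he, rfl⟩
  · rintro ⟨he, rfl⟩
    exact .cons he (.nil _)

theorem cast_fire {m : P → ℕ} {t : T} (h : N.enabled m t) (p : P) :
    (N.fire m t p : ℤ) = m p + N.inc p t := by
  have := h p
  simp only [fire, inc]
  omega

theorem FireSeq.map_val {TL : Set T} {m m' : P → ℕ} {s : List {t // t ∈ TL}}
    (h : (N.restrict TL).FireSeq m s m') : N.FireSeq m (s.map Subtype.val) m' := by
  induction h with
  | nil => exact .nil _
  | cons he _ ih => exact .cons he ih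

theorem projSeq_append (TL : Set T) [DecidablePred (· ∈ TL)] (s r : List T) :
    projSeq TL (s ++ r) = projSeq TL s ++ projSeq TL r :=
  List.filter_append ..

theorem projSeq_eq_nil {TE TI : Set T} [DecidablePred (· ∈ TE)] (hdisj : Disjoint TE TI)
    {w : List T} (hw : ∀ u ∈ w, u ∈ TI) : projSeq TE w = [] :=
  List.filter_eq_nil_iff.2 fun u hu => by simpa using Set.disjoint_right.1 hdisj (hw u hu)

section StateEquation

theorem parikh_cons [DecidableEq T] (t : T) (s : List T) :
    parikh (t :: s) = Pi.single t 1 + parikh s := by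
  ext u
  rcases eq_or_ne u t with rfl | hu
  · simp [parikh, add_comm]
  · simp [parikh, hu, hu.symm]

variable [Fintype T]

/-- `N.effect y p` is the entry at `p` of the marking change `[N]·y`. -/
def effect (N : PetriNet P T) (y : T → ℕ) (p : P) : ℤ :=
  ∑ u, (y u : ℤ) * N.inc p u

theorem effect_add (y z : T → ℕ) (p : P) :
    N.effect (y + z) p = N.effect y p + N.effect z p := by
  simp only [effect, Pi.add_apply, Nat.cast_add, add_mul, Finset.sum_add_distrib]

theorem effect_zero (p : P) : N.effect 0 p = 0 := by
  simp [effect]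

variable [DecidableEq T]

theorem effect_single (t : T) (p : P) : N.effect (Pi.single t 1) p = N.inc p t := by
  simp [effect, Pi.single_apply]

theorem FireSeq.cast_eq {m m' : P → ℕ} {s : List T} (h : N.FireSeq m s m') (p : P) :
    (m' p : ℤ) = m p + N.effect (parikh s) p := by
  induction h with
  | nil => simp [parikh, effect]
  | @cons m _ t s he _ ih =>
    rw [ih, cast_fire he, parikh_cons, effect_add, effect_single]
    ring

theorem marking_eq_of_cast {m m' : P → ℕ} (h : ∀ p, (m p : ℤ) = m' p) : m = m' :=
  funext fun p => by exact_mod_cast h p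

end StateEquation

section Acyclic

theorem SubnetAcyclic.exists_source [Finite T] {TI : Set T} (hacyc : N.SubnetAcyclic TI)
    {S : Set T} (hS : S ⊆ TI) (hne : S.Nonempty) :
    ∃ t ∈ S, ∀ u ∈ S, ∀ p, 0 < N.Pre p t → N.Post p u = 0 := by
  let before : T → T → Prop := fun u t => Relation.TransGen (N.subnetArc TI) (.inr u) (.inr t)
  have : IsTrans T before := ⟨fun _ _ _ => Relation.TransGen.trans⟩
  have : Std.Irrefl before := ⟨fun t => hacyc (.inr t)⟩
  obtain ⟨t, ht, hmin⟩ := (Finite.wellFounded_of_trans_of_irrefl before).has_min S hne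
  refine ⟨t, ht, fun u hu p hpre => Nat.eq_zero_of_not_pos fun hpost => hmin u hu ?_⟩
  exact .tail (.single (show N.subnetArc TI (.inr u) (.inl p) from ⟨hS hu, hpost⟩))
    (show N.subnetArc TI (.inl p) (.inr t) from ⟨hS ht, hpre⟩)

variable [Fintype T]

theorem enabled_of_effect_nonneg {z : T → ℕ} {t : T} {m : P → ℕ} (ht : 0 < z t)
    (hsrc : ∀ u, 0 < z u → ∀ p, 0 < N.Pre p t → N.Post p u = 0)
    (hnonneg : ∀ p, 0 ≤ (m p : ℤ) + N.effect z p) : N.enabled m t := by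
  intro p
  rcases Nat.eq_zero_or_pos (N.Pre p t) with hpre | hpre
  · simp [hpre]
  -- no transition of the support produces into `p`, so `[N]·z` only consumes there
  have hcons : N.effect z p = -((∑ u, z u * N.Pre p u : ℕ) : ℤ) := by
    rw [effect, Nat.cast_sum, ← Finset.sum_neg_distrib]
    refine Finset.sum_congr rfl fun u _ => ?_
    rcases Nat.eq_zero_or_pos (z u) with hu | hu
    · simp [hu]
    · simp [inc, hsrc u hu p hpre]
  have hle : N.Pre p t ≤ ∑ u, z u * N.Pre p u :=
    (Nat.le_mul_of_pos_left _ ht).trans <|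
      Finset.single_le_sum (f := fun u => z u * N.Pre p u) (fun u _ => Nat.zero_le _)
        (Finset.mem_univ t)
  have := hnonneg p
  rw [hcons] at this
  omega

variable [DecidableEq T]

theorem SubnetAcyclic.exists_fireSeq {TI : Set T} (hacyc : N.SubnetAcyclic TI) (z : T → ℕ)
    (hz : ∀ u, 0 < z u → u ∈ TI) {m m' : P → ℕ} (hm' : ∀ p, (m' p : ℤ) = m p + N.effect z p) :
    ∃ w, (∀ u ∈ w, u ∈ TI) ∧ N.FireSeq m w m' := by
  induction z using WellFoundedLT.induction generalizing m with
  | _ z ih =>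
  rcases eq_or_ne z 0 with rfl | hz0
  · obtain rfl : m = m' := marking_eq_of_cast fun p => by rw [hm', effect_zero, add_zero]
    exact ⟨[], by simp, .nil m⟩
  obtain ⟨t, ht, hsrc⟩ : ∃ t, 0 < z t ∧ ∀ u, 0 < z u → ∀ p, 0 < N.Pre p t → N.Post p u = 0 :=
    hacyc.exists_source (S := {u | 0 < z u}) hz
      (by simpa [Set.Nonempty, Nat.pos_iff_ne_zero, funext_iff] using hz0)
  have hen : N.enabled m t := enabled_of_effect_nonneg ht hsrc fun p => hm' p ▸ Nat.cast_nonneg _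
  have hsingle : Pi.single t 1 ≤ z := fun u => by
    rcases eq_or_ne u t with rfl | hu
    · rw [Pi.single_eq_same]; exact ht
    · simp [hu]
  have hsplit := add_tsub_cancel_of_le hsingle
  have heffect := N.effect_add (Pi.single t 1) (z - Pi.single t 1)
  simp only [hsplit, effect_single] at heffect
  obtain ⟨w, hw, hfire⟩ := ih (z - Pi.single t 1)
    (lt_of_le_of_ne tsub_le_self fun h => by simpa [h] using congrFun hsplit t)
    (fun u hu => hz u (lt_of_lt_of_le hu (tsub_le_self (a := z) u)))
    (m := N.fire m t) fun p => by
      rw [hm', heffect, cast_fire hen]; ring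
  exact ⟨t :: w, List.forall_mem_cons.2 ⟨hz t ht, hw⟩, .cons hen hfire⟩

end Acyclic

section BasisReachabilityGraph

variable [Fintype T] [DecidableEq T] {TE TI : Set T} [DecidablePred (· ∈ TE)]

theorem exists_mem_eVectorsMin_le {m : P → ℕ} {t : T} {y : T → ℕ}
    (hy : y ∈ N.eVectors TI m t) : ∃ y₀ ∈ N.eVectorsMin TI m t, y₀ ≤ y := by
  obtain ⟨y₀, hle, hmin⟩ := exists_minimal_le_of_wellFoundedLT _ y hy
  exact ⟨y₀, ⟨hmin.prop, fun _ hy' h => hmin.eq_of_le hy' h⟩, hle⟩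

theorem exists_fireSeq_of_mem_eVectors {m m' : P → ℕ} {t : T} {y : T → ℕ}
    (hy : y ∈ N.eVectors TI m t) (hm' : ∀ p, (m' p : ℤ) = m p + N.effect y p + N.inc p t) :
    ∃ w, (∀ u ∈ w, u ∈ TI) ∧ N.FireSeq m (w ++ [t]) m' := by
  obtain ⟨w, ⟨hw, m₁, hfire, hen⟩, rfl⟩ := hy
  refine ⟨w, hw, hfire.append (fireSeq_singleton_iff.2 ⟨hen, marking_eq_of_cast fun p => ?_⟩)⟩
  rw [cast_fire hen, hfire.cast_eq, hm']

theorem BrgPath.exists_fireSeq (hdisj : Disjoint TE TI) {m m' : P → ℕ}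
    {σ : List (T × (T → ℕ))} (h : BrgPath N TE TI m σ m') :
    ∃ s, N.FireSeq m s m' ∧ projSeq TE s = phi σ := by
  induction h with
  | nil m => exact ⟨[], .nil m, rfl⟩
  | @cons m m₁ m' t y σ ht hy hm₁ _ ih =>
    obtain ⟨s, hs, hproj⟩ := ih
    obtain ⟨w, hw, hfire⟩ := exists_fireSeq_of_mem_eVectors hy.1 hm₁
    refine ⟨w ++ [t] ++ s, hfire.append hs, ?_⟩
    rw [projSeq_append, projSeq_append, projSeq_eq_nil hdisj hw, hproj]
    simp [projSeq, phi, ht]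

/-- Replace `w` by a minimal explanation `w₀` with `π(w₀) ≤ π(w)`; after `t`, the leftover vector
`π(w) - π(w₀)` is fired by acyclicity. -/
theorem SubnetAcyclic.exists_brg_arc (hacyc : N.SubnetAcyclic TI) {m m' : P → ℕ} {w : List T}
    {t : T} (hw : ∀ u ∈ w, u ∈ TI) (h : N.FireSeq m (w ++ [t]) m') :
    ∃ y ∈ N.eVectorsMin TI m t, ∃ m₁, (∀ p, (m₁ p : ℤ) = m p + N.effect y p + N.inc p t) ∧
      ∃ w', (∀ u ∈ w', u ∈ TI) ∧ N.FireSeq m₁ w' m' := by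
  obtain ⟨m₂, hfire, ht⟩ := fireSeq_append_iff.1 h
  obtain ⟨hen, rfl⟩ := fireSeq_singleton_iff.1 ht
  obtain ⟨y, hymin, hle⟩ :=
    exists_mem_eVectorsMin_le (y := parikh w) ⟨w, ⟨hw, m₂, hfire, hen⟩, rfl⟩
  obtain ⟨w₀, ⟨_, m₀, hfire₀, hen₀⟩, rfl⟩ := hymin.1
  refine ⟨_, hymin, N.fire m₀ t, fun p => by rw [cast_fire hen₀, hfire₀.cast_eq], ?_⟩
  have hsupp : ∀ u, 0 < (parikh w - parikh w₀) u → u ∈ TI := fun u hu =>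
    hw u (List.count_pos_iff.1 (hu.trans_le (tsub_le_self (a := parikh w) u)))
  refine hacyc.exists_fireSeq _ hsupp fun p => ?_
  have heffect := N.effect_add (parikh w₀) (parikh w - parikh w₀) p
  rw [add_tsub_cancel_of_le hle] at heffect
  rw [cast_fire hen, cast_fire hen₀, hfire.cast_eq, hfire₀.cast_eq, heffect]
  ring

theorem SubnetAcyclic.exists_mem_brgLang (hcompl : IsCompl TE TI) (hacyc : N.SubnetAcyclic TI)
    (τ : List T) {m m' : P → ℕ} {s : List T} (h : N.FireSeq m s m') (hs : projSeq TE s = τ) :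
    ∃ σ ∈ N.brgLang TE TI m, phi σ = τ := by
  induction τ generalizing s m with
  | nil => exact ⟨[], ⟨m, .nil m⟩, rfl⟩
  | cons t τ ih =>
    obtain ⟨w, r, rfl, hw, ht, hr⟩ := List.filter_eq_cons_iff.1 hs
    have hwTI : ∀ u ∈ w, u ∈ TI := fun u hu => hcompl.compl_eq ▸ by simpa using hw u hu
    obtain ⟨m₂, h₁, h₂⟩ :=
      fireSeq_append_iff.1 (by simpa using h : N.FireSeq m (w ++ [t] ++ r) m')
    obtain ⟨y, hy, m₁, hm₁, w', hw', hfire⟩ := hacyc.exists_brg_arc hwTI h₁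
    have hproj : projSeq TE (w' ++ r) = τ := by
      rw [projSeq_append, projSeq_eq_nil hcompl.disjoint hw']
      exact hr
    obtain ⟨σ, ⟨m'', hσ⟩, rfl⟩ := ih (hfire.append h₂) hproj
    exact ⟨(t, y) :: σ, ⟨m'', .cons (by simpa using ht) hy hm₁ hσ⟩, rfl⟩

end BasisReachabilityGraph

theorem lowLabelLang_subset_image_lang {A : Type} (l : T → A) (TL : Set T)
    [DecidablePred (· ∈ TL)] (m0 : P → ℕ) :
    N.lowLabelLang l TL m0 ⊆ (fun s => (projSeq TL s).map l) '' N.lang m0 := by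
  rintro _ ⟨s, ⟨m', hs⟩, rfl⟩
  refine ⟨s.map Subtype.val, ⟨m', hs.map_val⟩, ?_⟩
  dsimp only
  rw [projSeq, List.filter_eq_self.2 (by simp +contextual), List.map_map]
  rfl

end PetriNet

theorem snni_iff_every_brg_sequence_matched_general
    {P T A : Type} [Fintype T] [DecidableEq T]
    (N : PetriNet P T) (m0 : P → ℕ) (l : T → A) (AL AH : Set A)
    [DecidablePred fun t => l t ∈ AL]
    (hcover : AL ∪ AH = Set.univ) (hdisj : Disjoint AL AH)
    (hacyc : N.SubnetAcyclic {t | l t ∈ AH}) :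
    N.SNNI m0 l AL ↔
      ∀ σ ∈ N.brgLang {t | l t ∈ AL} {t | l t ∈ AH} m0,
        ∃ s' ∈ (N.restrict {t | l t ∈ AL}).lang m0,
          (PetriNet.phi σ).map l = s'.map fun t => l t.1 := by
  have hcompl : IsCompl {t | l t ∈ AL} {t | l t ∈ AH} :=
    IsCompl.preimage l ⟨hdisj, codisjoint_iff.2 hcover⟩
  constructor
  · rintro hsnni σ ⟨m', hσ⟩
    obtain ⟨s, hs, hproj⟩ := hσ.exists_fireSeq hcompl.disjoint
    have hlow : (PetriNet.phi σ).map l ∈ N.lowLabelLang l {t | l t ∈ AL} m0 :=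
      hsnni ▸ ⟨s, ⟨m', hs⟩, congrArg (List.map l) hproj⟩
    obtain ⟨s', hs', heq⟩ := hlow
    exact ⟨s', hs', heq.symm⟩
  · intro hmatch
    refine Set.Subset.antisymm ?_ (N.lowLabelLang_subset_image_lang l _ m0)
    rintro _ ⟨s, ⟨m', hs⟩, rfl⟩
    obtain ⟨σ, hσ, hphi⟩ := hacyc.exists_mem_brgLang hcompl _ hs rfl
    obtain ⟨s', hs', heq⟩ := hmatch σ hσ
    exact ⟨s', hs', heq.symm.trans (congrArg (List.map l) hphi)⟩

/-- For a bounded LPNS with `A = A_L ∪ A_H` and acyclic `T_H`-induced subnet,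
SNNI holds iff every `s ∈ φ(L(G))` is label-matched by some `s' ∈ L(N_L, m0)`. -/
theorem snni_iff_every_brg_sequence_matched
    {P T A : Type} [Fintype P] [Fintype T] [DecidableEq T]
    (N : PetriNet P T) (m0 : P → ℕ) (l : T → A) (AL AH : Set A)
    [DecidablePred fun t => l t ∈ AL]
    (hcover : AL ∪ AH = Set.univ) (hdisj : Disjoint AL AH)
    (hbound : N.Bounded m0)
    (hacyc : N.SubnetAcyclic {t | l t ∈ AH}) :
    N.SNNI m0 l AL ↔
      ∀ σ ∈ N.brgLang {t | l t ∈ AL} {t | l t ∈ AH} m0,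
        ∃ s' ∈ (N.restrict {t | l t ∈ AL}).lang m0,
          (PetriNet.phi σ).map l = s'.map fun t => l t.1 :=
  snni_iff_every_brg_sequence_matched_general N m0 l AL AH hcover hdisj hacyc
end

section
/- Let G be the basis reachability graph of a labeled Petri net system (N, m0, l, A) with the low-level transitions T_L as explicit transitions and the high-level transitions T_H as implicit transitions. For every σ ∈ L(G), if φ'(σ) is the zero vector, then φ(σ) ∈ L(N_L, m0), i.e., φ(σ) is a firing sequence of the low-level subnet system. -/
open scoped BigOperators

lemma brg_zero_aux {P T : Type} [Fintype T] [DecidableEq T]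
    (N : PetriNet P T) (TE TI : Set T) :
    ∀ {σ : List (T × (T → ℕ))} {m m'' : P → ℕ},
      PetriNet.BrgPath N TE TI m σ m'' → PetriNet.phi' σ = 0 →
        ∃ s : List {t // t ∈ TE}, s.map Subtype.val = PetriNet.phi σ ∧
          (N.restrict TE).FireSeq m s m'' := by
  intro σ m m'' hpath
  induction hpath with
  | nil m => intro _; exact ⟨[], rfl, PetriNet.FireSeq.nil m⟩
  | @cons m m' m'' t y σ hE hy hm' _ ih =>
    intro h0
    have hsplit : y = 0 ∧ PetriNet.phi' σ = 0 := by
      constructor <;> funext u <;>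
      · have := congrFun h0 u
        simp [PetriNet.phi', Pi.add_apply] at this ⊢
        omega
    obtain ⟨hy0, hσ0⟩ := hsplit
    obtain ⟨s, hs, hfs⟩ := ih hσ0
    -- y = 0 is an e-vector: get the empty explanation, so t is enabled at m
    obtain ⟨s0, hs0, hpar⟩ := hy.1
    have hs0nil : s0 = [] := by
      rw [hy0] at hpar
      cases s0 with
      | nil => rfl
      | cons a l =>
        have := congrFun hpar a
        simp [PetriNet.parikh] at this
    obtain ⟨_, m1, hfseq, hen⟩ := hs0
    rw [hs0nil] at hfseq
    have hm1 : m1 = m := by cases hfseq; rfl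
    rw [hm1] at hen
    -- m' = fire m t
    have hm'fire : m' = N.fire m t := by
      funext p
      have h1 := hm' p
      rw [hy0] at h1
      simp only [Pi.zero_apply, Nat.cast_zero, zero_mul, Finset.sum_const_zero,
        add_zero] at h1
      have h2 : ((N.fire m t p : ℕ) : ℤ) = (m p : ℤ) + N.inc p t := by
        unfold PetriNet.fire PetriNet.inc
        have := hen p
        push_cast [Nat.sub_add_cancel, this]
        ring
      exact_mod_cast h1.trans h2.symm
    refine ⟨⟨t, hE⟩ :: s, ?_, ?_⟩
    · simp [PetriNet.phi, hs, PetriNet.phi]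
    · refine PetriNet.FireSeq.cons (fun p => hen p) ?_
      have : (N.restrict TE).fire m ⟨t, hE⟩ = N.fire m t := rfl
      rw [this, ← hm'fire]
      exact hfs

/-- if `σ ∈ L(G)` has `φ'(σ) = 0`, then `φ(σ) ∈ L(N_L, m0)`. -/
theorem brg_zero_jvector_phi_in_lowLang
    {P T A : Type} [Fintype T] [DecidableEq T]
    (N : PetriNet P T) (m0 : P → ℕ) (l : T → A) (AL AH : Set A)
    (hcover : AL ∪ AH = Set.univ) (hdisj : Disjoint AL AH) :
    ∀ σ ∈ N.brgLang {t | l t ∈ AL} {t | l t ∈ AH} m0,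
      PetriNet.phi' σ = 0 →
        PetriNet.phi σ ∈ N.lowLang {t | l t ∈ AL} m0 := by
  intro σ hσ h0
  obtain ⟨m', hpath⟩ := hσ
  obtain ⟨s, hs, hfs⟩ := brg_zero_aux N _ _ hpath h0
  exact ⟨s, ⟨m', hfs⟩, hs⟩
end

section
/- Let G be the basis reachability graph of a labeled Petri net system (N, m0, l, A) with transitions partitioned into explicit transitions T_E and implicit transitions T_I. For every σ ∈ L(G), if the path labeled σ leads from m0 to state m in G, then m = m0 + [N]_I·φ'(σ) + [N]_E·π(φ(σ)), where [N]_I and [N]_E are the restrictions of the incidence matrix to the columns of T_I and T_E. -/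
open scoped BigOperators

/-- along any BRG path labeled `σ` from `m0` to `m`,
`m = m0 + [N]_I·φ'(σ) + [N]_E·π(φ(σ))` (the vectors `φ'(σ)` and `π(φ(σ))` being supported
on `T_I` and `T_E` respectively, the sums over all of `T` equal the restricted products). -/
theorem brg_path_state_equation
    {P T : Type} [Fintype T] [DecidableEq T]
    (N : PetriNet P T) (m0 : P → ℕ) (TE TI : Set T)
    (hcover : TE ∪ TI = Set.univ) (hdisj : Disjoint TE TI) :
    ∀ (σ : List (T × (T → ℕ))) (m : P → ℕ),
      PetriNet.BrgPath N TE TI m0 σ m →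
      ∀ p, (m p : ℤ) =
          (m0 p : ℤ) + (∑ u, (PetriNet.phi' σ u : ℤ) * N.inc p u) +
            ∑ u, (PetriNet.parikh (PetriNet.phi σ) u : ℤ) * N.inc p u := by
  intro σ
  induction σ generalizing m0 with
  | nil =>
    intro m hm p
    cases hm
    simp [PetriNet.phi', PetriNet.phi, PetriNet.parikh]
  | cons a σ ih =>
    intro m hm p
    obtain ⟨t, y⟩ := a
    cases hm with
    | cons hte hy heq hrest =>
      have := ih _ m hrest p
      rw [this, heq p]
      have hphi' : ∀ u, (PetriNet.phi' ((t, y) :: σ) u : ℤ)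
          = (y u : ℤ) + (PetriNet.phi' σ u : ℤ) := by
        intro u; simp [PetriNet.phi']
      have hpar : ∀ u, (PetriNet.parikh (PetriNet.phi ((t, y) :: σ)) u : ℤ)
          = (if u = t then 1 else 0) + (PetriNet.parikh (PetriNet.phi σ) u : ℤ) := by
        intro u
        simp [PetriNet.phi, PetriNet.parikh, List.count_cons]
        by_cases h : u = t
        · simp [h]; ring
        · have h' : t ≠ u := fun e => h e.symm
          simp [h, h']
      simp only [hphi', hpar, add_mul, Finset.sum_add_distrib, one_mul, zero_mul, ite_mul]
      rw [Finset.sum_ite_eq' Finset.univ t (fun u => N.inc p u)]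
      simp
      ring
end

section
/- Let (N, m0, l, A) be a labeled Petri net system with transitions partitioned into explicit transitions T_E and implicit transitions T_I such that the T_I-induced subnet is acyclic, and let G be its basis reachability graph. Then every state of G is a reachable marking of (N, m0), i.e., the set of basis markings is a subset of R(N, m0). -/
open scoped BigOperators

section Aux

variable {P T : Type}

lemma fireSeq_append {N : PetriNet P T} {m m1 m2 : P → ℕ} {s s' : List T}
    (h1 : N.FireSeq m s m1) (h2 : N.FireSeq m1 s' m2) : N.FireSeq m (s ++ s') m2 := by
  induction h1 with
  | nil => simpa using h2
  | cons he _ ih => exact PetriNet.FireSeq.cons he (ih h2)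

lemma fire_int {N : PetriNet P T} {m : P → ℕ} {t : T} (he : N.enabled m t) (p : P) :
    ((N.fire m t) p : ℤ) = (m p : ℤ) + N.inc p t := by
  have := he p
  simp only [PetriNet.fire, PetriNet.inc]
  push_cast [Nat.cast_sub this]
  ring

lemma fireSeq_int [Fintype T] [DecidableEq T] {N : PetriNet P T} {m m' : P → ℕ}
    {s : List T} (h : N.FireSeq m s m') (p : P) :
    (m' p : ℤ) = (m p : ℤ) + ∑ u, (PetriNet.parikh s u : ℤ) * N.inc p u := by
  induction h with
  | nil m => simp [PetriNet.parikh]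
  | @cons m m' t s he hs ih =>
    have hc : ∀ u : T, (PetriNet.parikh (t :: s) u : ℤ)
        = (PetriNet.parikh s u : ℤ) + (if u = t then 1 else 0) := by
      intro u
      simp only [PetriNet.parikh, List.count_cons, Nat.cast_add, Nat.cast_ite,
        Nat.cast_one, Nat.cast_zero]
      congr 1
      by_cases h : u = t
      · subst h; simp
      · simp only [beq_iff_eq]; rw [if_neg (Ne.symm h), if_neg h]
    rw [ih, fire_int he]
    have : ∑ u, (PetriNet.parikh (t :: s) u : ℤ) * N.inc p u
        = (∑ u, (PetriNet.parikh s u : ℤ) * N.inc p u)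
          + ∑ u, (if u = t then 1 else 0) * N.inc p u := by
      rw [← Finset.sum_add_distrib]
      refine Finset.sum_congr rfl fun u _ => ?_
      rw [hc u]; ring
    rw [this]
    have : ∑ u, (if u = t then (1:ℤ) else 0) * N.inc p u = N.inc p t := by
      simp [ite_mul]
    rw [this]; ring

lemma brgPath_reach [Fintype T] [DecidableEq T] {N : PetriNet P T} {TE TI : Set T}
    {m m'' : P → ℕ} {σ : List (T × (T → ℕ))} (h : PetriNet.BrgPath N TE TI m σ m'') :
    m'' ∈ N.reach m := by
  induction h with
  | nil m => exact ⟨[], PetriNet.FireSeq.nil m⟩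
  | @cons m m' m'' t y σ htE hy hm' _ ih =>
    obtain ⟨s', hs'⟩ := ih
    obtain ⟨s, hs, hps⟩ := hy.1
    obtain ⟨_, m1, hfs, hen⟩ := hs
    -- m' = fire m1 t
    have hm'eq : m' = N.fire m1 t := by
      funext p
      have h1 : ((N.fire m1 t) p : ℤ) = (m1 p : ℤ) + N.inc p t := fire_int hen p
      have h2 := fireSeq_int hfs p
      have : (m' p : ℤ) = ((N.fire m1 t) p : ℤ) := by
        rw [hm' p, h1, h2, hps]
      exact_mod_cast this
    subst hm'eq
    exact ⟨s ++ [t] ++ s', fireSeq_append (fireSeq_append hfs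
      (PetriNet.FireSeq.cons hen (PetriNet.FireSeq.nil _))) hs'⟩

end Aux

/-- if the `T_I`-induced subnet is acyclic, every state of the BRG (basis
marking) is a reachable marking of `(N, m0)`. -/
theorem brgStates_subset_reach
    {P T A : Type} [Fintype T] [DecidableEq T]
    (N : PetriNet P T) (m0 : P → ℕ) (l : T → A) (TE TI : Set T)
    (hcover : TE ∪ TI = Set.univ) (hdisj : Disjoint TE TI)
    (hacyc : N.SubnetAcyclic TI) :
    N.brgStates TE TI m0 ⊆ N.reach m0 := by
  rintro m ⟨σ, hσ⟩
  obtain ⟨s, hs⟩ := brgPath_reach hσ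
  exact ⟨s, hs⟩
end

section
/- Let (N, m0, l, A) be a labeled Petri net system with transitions partitioned into explicit transitions T_E and implicit transitions T_I such that the T_I-induced subnet is acyclic, and let G be its basis reachability graph. For every firing sequence s ∈ L(N, m0), there exists σ ∈ L(G) such that φ(σ) = P_E(s) and φ'(σ) ≤ π(P_I(s)) componentwise. -/
open scoped BigOperators

section Aux
namespace PetriNet

variable {P T : Type} [Fintype T] [DecidableEq T]

lemma fire_int (N : PetriNet P T) {m : P → ℕ} {t : T} (h : N.enabled m t) (p : P) :
    (N.fire m t p : ℤ) = m p + N.inc p t := by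
  have := h p
  simp only [fire, inc]
  omega

lemma count_cons' (a b : T) (l : List T) :
    ((List.count a (b :: l) : ℤ)) = List.count a l + if a = b then 1 else 0 := by
  rw [List.count_cons]
  rcases eq_or_ne a b with h | h
  · subst h; simp
  · simp [h, Ne.symm h]

lemma fireSeq_state (N : PetriNet P T) :
    ∀ {s : List T} {m m' : P → ℕ}, N.FireSeq m s m' →
      ∀ p, (m' p : ℤ) = m p + ∑ u, (s.count u : ℤ) * N.inc p u := by
  intro s
  induction s with
  | nil =>
    intro m m' h p
    cases h
    simp
  | cons t s ih =>
    intro m m' h p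
    cases h with
    | cons he hrest =>
      rw [ih hrest p, N.fire_int he p]
      have : ∀ u, ((t :: s).count u : ℤ) * N.inc p u
          = (s.count u : ℤ) * N.inc p u + (if u = t then N.inc p u else 0) := by
        intro u
        rw [count_cons' u t s]
        by_cases h : u = t <;> simp [h] <;> ring
      rw [Finset.sum_congr rfl (fun u _ => this u), Finset.sum_add_distrib,
        Finset.sum_ite_eq' Finset.univ t (fun u => N.inc p u)]
      simp
      ring

/-- In the acyclic `TI`-subnet, the state equation implies firability. -/
lemma acyclic_fire (N : PetriNet P T) (TI : Set T) (hacyc : N.SubnetAcyclic TI) :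
    ∀ (n : ℕ) (v : T → ℕ), (∑ u, v u) = n → ∀ (m m' : P → ℕ),
      (∀ u, u ∉ TI → v u = 0) →
      (∀ p, (m' p : ℤ) = m p + ∑ u, (v u : ℤ) * N.inc p u) →
      ∃ w : List T, (∀ u ∈ w, u ∈ TI) ∧ (∀ u, w.count u = v u) ∧ N.FireSeq m w m' := by
  intro n
  induction n using Nat.strong_induction_on with
  | _ n ih =>
    intro v hsum m m' hsupp hstate
    by_cases hz : ∀ u, v u = 0
    · have hm : m' = m := by
        funext p
        have := hstate p
        rw [Finset.sum_eq_zero (fun u _ => by rw [hz u]; simp)] at this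
        omega
      refine ⟨[], by simp, fun u => by simp [hz u], ?_⟩
      rw [hm]; exact FireSeq.nil m
    · push_neg at hz
      obtain ⟨t0, ht0⟩ := hz
      -- relation on T from the acyclic subnet graph
      set r : T → T → Prop := fun u t =>
        Relation.TransGen (N.subnetArc TI) (Sum.inr u) (Sum.inr t) with hr
      have htrans : IsTrans T r := ⟨fun a b c h1 h2 => h1.trans h2⟩
      have hirr : IsIrrefl T r := ⟨fun a h => hacyc (Sum.inr a) h⟩
      have hwf : WellFounded r := Finite.wellFounded_of_trans_of_irrefl r
      obtain ⟨t, htS, hmin⟩ := hwf.has_min {u | 0 < v u} ⟨t0, Nat.pos_of_ne_zero ht0⟩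
      have htpos : 0 < v t := htS
      have htTI : t ∈ TI := by
        by_contra h
        rw [hsupp t h] at htpos
        exact Nat.lt_irrefl 0 htpos
      -- t is enabled at m
      have hen : N.enabled m t := by
        by_contra hne
        simp only [enabled, not_forall, not_le] at hne
        obtain ⟨p, hp⟩ := hne
        -- state equation at p in ℕ form
        have hsplit : (∑ u, (v u : ℤ) * N.inc p u)
            = (∑ u, (v u : ℤ) * N.Post p u) - (∑ u, (v u : ℤ) * N.Pre p u) := by
          rw [← Finset.sum_sub_distrib]
          exact Finset.sum_congr rfl (fun u _ => by simp [inc]; ring)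
        have hA : (N.Pre p t : ℤ) ≤ ∑ u, (v u : ℤ) * N.Pre p u := by
          have h1 : (N.Pre p t : ℤ) ≤ (v t : ℤ) * N.Pre p t := by
            have : (1 : ℤ) ≤ (v t : ℤ) := by exact_mod_cast htS
            nlinarith [Int.ofNat_nonneg (N.Pre p t)]
          refine le_trans h1 (Finset.single_le_sum (f := fun u => (v u : ℤ) * N.Pre p u) ?_ (Finset.mem_univ t))
          intro u _
          positivity
        have hBpos : (0 : ℤ) < ∑ u, (v u : ℤ) * N.Post p u := by
          have h0 := hstate p
          have hmp : (m p : ℤ) < N.Pre p t := by exact_mod_cast hp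
          have hm' : (0 : ℤ) ≤ (m' p : ℤ) := Int.ofNat_nonneg _
          rw [hsplit] at h0
          linarith
        -- extract a transition u with v u > 0 and Post p u > 0
        have : ∃ u, 0 < v u ∧ 0 < N.Post p u := by
          by_contra hno
          push_neg at hno
          have : (∑ u, (v u : ℤ) * N.Post p u) = 0 := by
            refine Finset.sum_eq_zero (fun u _ => ?_)
            rcases Nat.eq_zero_or_pos (v u) with h | h
            · simp [h]
            · have h2 := hno u h
              have h3 : N.Post p u = 0 := by omega
              simp [h3]
          omega
        obtain ⟨u, hvu, hpost⟩ := this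
        have huTI : u ∈ TI := by
          by_contra h
          rw [hsupp u h] at hvu
          exact Nat.lt_irrefl 0 hvu
        have harc1 : N.subnetArc TI (Sum.inr u) (Sum.inl p) := ⟨huTI, hpost⟩
        have harc2 : N.subnetArc TI (Sum.inl p) (Sum.inr t) := ⟨htTI, by omega⟩
        exact hmin u hvu (Relation.TransGen.head harc1 (Relation.TransGen.single harc2))
      -- fire t, recurse
      have hvt : 1 ≤ v t := htpos
      set v' : T → ℕ := Function.update v t (v t - 1) with hv'
      have hv'app : ∀ u, v' u = if u = t then v t - 1 else v u := by
        intro u; by_cases h : u = t <;> simp [hv', h, Function.update]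
      have hsum' : (∑ u, v' u) = n - 1 := by
        have h1 : (∑ u, v' u) + 1 = ∑ u, v u := by
          rw [← Finset.sum_add_sum_compl {t} , ← Finset.sum_add_sum_compl {t} (f := v)]
          have e1 : ∑ u ∈ ({t} : Finset T), v' u = v t - 1 := by simp [hv'app]
          have e2 : ∑ u ∈ ({t} : Finset T), v u = v t := by simp
          have e3 : ∑ u ∈ ({t} : Finset T)ᶜ, v' u = ∑ u ∈ ({t} : Finset T)ᶜ, v u := by
            refine Finset.sum_congr rfl (fun u hu => ?_)
            simp only [Finset.mem_compl, Finset.mem_singleton] at hu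
            simp [hv'app, hu]
          rw [e1, e2, e3]
          omega
        omega
      have hnpos : 1 ≤ n := by
        rw [← hsum]
        calc 1 ≤ v t := hvt
        _ ≤ ∑ u, v u := Finset.single_le_sum (fun u _ => Nat.zero_le _) (Finset.mem_univ t)
      have hstate' : ∀ p, (m' p : ℤ) = (N.fire m t p : ℤ) + ∑ u, (v' u : ℤ) * N.inc p u := by
        intro p
        rw [N.fire_int hen p]
        have key : ∀ u, (v u : ℤ) * N.inc p u
            = (v' u : ℤ) * N.inc p u + (if u = t then N.inc p u else 0) := by
          intro u
          rw [hv'app u]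
          by_cases h : u = t
          · subst h
            have : ((v u - 1 : ℕ) : ℤ) = (v u : ℤ) - 1 := by omega
            simp [this]
            ring
          · simp [h]
        rw [hstate p, Finset.sum_congr rfl (fun u _ => key u), Finset.sum_add_distrib,
          Finset.sum_ite_eq' Finset.univ t (fun u => N.inc p u)]
        simp
        ring
      have hsupp' : ∀ u, u ∉ TI → v' u = 0 := by
        intro u hu
        rw [hv'app]
        have : u ≠ t := fun h => hu (h ▸ htTI)
        simp [this, hsupp u hu]
      obtain ⟨w, hwTI, hwc, hwf2⟩ := ih (n - 1) (by omega) v' hsum' (N.fire m t) m' hsupp' hstate'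
      refine ⟨t :: w, ?_, ?_, FireSeq.cons hen hwf2⟩
      · intro u hu
        rcases List.mem_cons.mp hu with h | h
        · exact h ▸ htTI
        · exact hwTI u h
      · intro u
        rw [List.count_cons, hwc u, hv'app u]
        by_cases h : u = t
        · subst h; simp; omega
        · simp [h, Ne.symm h]

end PetriNet
end Aux

section Aux2
namespace PetriNet

variable {P T : Type} [Fintype T] [DecidableEq T]

lemma exists_min_evector (N : PetriNet P T) (TI : Set T) (m : P → ℕ) (t : T) :
    ∀ (n : ℕ) (y : T → ℕ), y ∈ N.eVectors TI m t → (∑ u, y u) = n →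
      ∃ y', y' ∈ N.eVectorsMin TI m t ∧ y' ≤ y := by
  intro n
  induction n using Nat.strong_induction_on with
  | _ n ih =>
    intro y hy hsum
    by_cases hmin : ∀ y' ∈ N.eVectors TI m t, y' ≤ y → y' = y
    · exact ⟨y, ⟨hy, hmin⟩, le_refl y⟩
    · push_neg at hmin
      obtain ⟨y1, hy1, hle, hne⟩ := hmin
      have hlt : (∑ u, y1 u) < ∑ u, y u := by
        refine Finset.sum_lt_sum (fun u _ => hle u) ?_
        by_contra hno
        push_neg at hno
        exact hne (funext fun u => le_antisymm (hle u) (hno u (Finset.mem_univ u)))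
      obtain ⟨y', hy', hle'⟩ := ih (∑ u, y1 u) (hsum ▸ hlt) y1 hy1 rfl
      exact ⟨y', hy', le_trans hle' hle⟩

lemma brg_cover (N : PetriNet P T) (TE TI : Set T)
    [DecidablePred (· ∈ TE)] [DecidablePred (· ∈ TI)]
    (hcover : TE ∪ TI = Set.univ) (hdisj : Disjoint TE TI)
    (hacyc : N.SubnetAcyclic TI) :
    ∀ (s : List T) (m m' : P → ℕ), N.FireSeq m s m' →
      ∀ (mb : P → ℕ) (v : T → ℕ), (∀ u, u ∉ TI → v u = 0) →
        (∀ p, (m p : ℤ) = mb p + ∑ u, (v u : ℤ) * N.inc p u) →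
        ∃ σ mb', N.BrgPath TE TI mb σ mb' ∧ phi σ = projSeq TE s ∧
          ∃ v' : T → ℕ,
            (∀ u, phi' σ u + v' u = v u + (projSeq TI s).count u) ∧
            (∀ u, u ∉ TI → v' u = 0) ∧
            (∀ p, (m' p : ℤ) = mb' p + ∑ u, (v' u : ℤ) * N.inc p u) := by
  intro s
  induction s with
  | nil =>
    intro m m' hseq mb v hsupp hstate
    cases hseq
    refine ⟨[], mb, BrgPath.nil mb, by simp [phi, projSeq], v, ?_, hsupp, hstate⟩
    intro u
    simp [phi', projSeq]
  | cons t s ih =>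
    intro m m' hseq mb v hsupp hstate
    cases hseq with
    | cons hen hrest =>
      by_cases hTI : t ∈ TI
      · -- implicit transition
        have htE : t ∉ TE := fun h => (Set.disjoint_left.mp hdisj h) hTI
        set v1 : T → ℕ := fun u => v u + if u = t then 1 else 0 with hv1
        have hsupp1 : ∀ u, u ∉ TI → v1 u = 0 := by
          intro u hu
          have : u ≠ t := fun h => hu (h ▸ hTI)
          simp [hv1, this, hsupp u hu]
        have hstate1 : ∀ p, (N.fire m t p : ℤ) = mb p + ∑ u, (v1 u : ℤ) * N.inc p u := by
          intro p
          rw [N.fire_int hen p, hstate p]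
          have key : ∀ u, (v1 u : ℤ) * N.inc p u
              = (v u : ℤ) * N.inc p u + (if u = t then N.inc p u else 0) := by
            intro u
            by_cases h : u = t
            · simp only [hv1, h, if_true]
              push_cast
              ring
            · simp [hv1, h]
          rw [Finset.sum_congr rfl (fun u _ => key u), Finset.sum_add_distrib,
            Finset.sum_ite_eq' Finset.univ t (fun u => N.inc p u)]
          simp
          ring
        obtain ⟨σ, mb', hpath, hphi, v', hcnt, hsupp', hstate'⟩ :=
          ih (N.fire m t) m' hrest mb v1 hsupp1 hstate1
        refine ⟨σ, mb', hpath, ?_, v', ?_, hsupp', hstate'⟩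
        · rw [hphi]
          simp [projSeq, List.filter_cons, htE]
        · intro u
          have hps : projSeq TI (t :: s) = t :: projSeq TI s := by
            simp [projSeq, List.filter_cons, hTI]
          have h1 := hcnt u
          have h3 : v1 u = v u + if u = t then 1 else 0 := rfl
          rw [hps]
          by_cases h : u = t
          · subst h
            rw [List.count_cons, if_pos (by simp : ((u == u) = true)), h1]
            have h3' : v1 u = v u + 1 := by simp [hv1]
            rw [h3']
            omega
          · rw [List.count_cons, if_neg (by simp [Ne.symm h] : ¬ ((t == u) = true)), h1]
            have h3' : v1 u = v u := by simp [hv1, h]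
            rw [h3']
            omega
      · -- explicit transition
        have htE : t ∈ TE := by
          have : t ∈ TE ∪ TI := hcover ▸ Set.mem_univ t
          rcases this with h | h
          · exact h
          · exact absurd h hTI
        obtain ⟨w, hwTI, hwc, hwseq⟩ :=
          N.acyclic_fire TI hacyc (∑ u, v u) v rfl mb m hsupp hstate
        have hwexp : w ∈ N.explanations TI mb t := ⟨hwTI, m, hwseq, hen⟩
        have hwpar : parikh w = v := funext fun u => hwc u
        have hwev : v ∈ N.eVectors TI mb t := ⟨w, hwexp, hwpar⟩
        obtain ⟨y, hymin, hyle⟩ := N.exists_min_evector TI mb t (∑ u, v u) v hwev rfl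
        obtain ⟨sy, hsyexp, hsypar⟩ := hymin.1
        obtain ⟨hsyTI, my, hsyseq, hsyen⟩ := hsyexp
        set mb1 : P → ℕ := N.fire my t with hmb1
        have harc : ∀ p, (mb1 p : ℤ) = mb p + (∑ u, (y u : ℤ) * N.inc p u) + N.inc p t := by
          intro p
          rw [hmb1, N.fire_int hsyen p, N.fireSeq_state hsyseq p]
          have : ∀ u, ((sy.count u : ℤ)) = (y u : ℤ) := by
            intro u; rw [← hsypar]; rfl
          rw [Finset.sum_congr rfl (fun u _ => by rw [this u])]
        set v1 : T → ℕ := fun u => v u - y u with hv1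
        have hyv : ∀ u, y u ≤ v u := fun u => hyle u
        have hsupp1 : ∀ u, u ∉ TI → v1 u = 0 := by
          intro u hu
          simp only [hv1]
          have := hsupp u hu
          omega
        have hstate1 : ∀ p, (N.fire m t p : ℤ) = mb1 p + ∑ u, (v1 u : ℤ) * N.inc p u := by
          intro p
          rw [N.fire_int hen p, hstate p, harc p]
          have key : ∀ u, (v1 u : ℤ) * N.inc p u = (v u : ℤ) * N.inc p u - (y u : ℤ) * N.inc p u := by
            intro u
            have h1 : ((v u - y u : ℕ) : ℤ) = (v u : ℤ) - y u := by
              have := hyv u; omega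
            simp only [hv1]
            rw [h1]; ring
          rw [Finset.sum_congr rfl (fun u _ => key u), Finset.sum_sub_distrib]
          ring
        obtain ⟨σ, mb', hpath, hphi, v', hcnt, hsupp', hstate'⟩ :=
          ih (N.fire m t) m' hrest mb1 v1 hsupp1 hstate1
        refine ⟨(t, y) :: σ, mb', BrgPath.cons htE hymin harc hpath, ?_, v', ?_, hsupp', hstate'⟩
        · simp [phi, projSeq, List.filter_cons, htE] at hphi ⊢
          exact hphi
        · intro u
          have h1 := hcnt u
          have h2 : (projSeq TI (t :: s)).count u = (projSeq TI s).count u := by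
            simp [projSeq, List.filter_cons, hTI]
          have h3 : phi' ((t, y) :: σ) u = y u + phi' σ u := by
            simp [phi']
          rw [h2, h3]
          have h4 : v1 u = v u - y u := rfl
          have h5 := hyv u
          omega

end PetriNet
end Aux2


/-- if the `T_I`-induced subnet is acyclic, every firing sequence
`s ∈ L(N, m0)` is covered by some `σ ∈ L(G)` with `φ(σ) = P_E(s)` and
`φ'(σ) ≤ π(P_I(s))` componentwise. -/
theorem firing_sequence_covered_by_brg
    {P T A : Type} [Fintype T] [DecidableEq T]
    (N : PetriNet P T) (m0 : P → ℕ) (l : T → A) (TE TI : Set T)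
    [DecidablePred (· ∈ TE)] [DecidablePred (· ∈ TI)]
    (hcover : TE ∪ TI = Set.univ) (hdisj : Disjoint TE TI)
    (hacyc : N.SubnetAcyclic TI) :
    ∀ s ∈ N.lang m0,
      ∃ σ ∈ N.brgLang TE TI m0,
        PetriNet.phi σ = PetriNet.projSeq TE s ∧
          PetriNet.phi' σ ≤ PetriNet.parikh (PetriNet.projSeq TI s) := by
  rintro s ⟨m', hseq⟩
  obtain ⟨σ, mb', hpath, hphi, v', hcnt, -, -⟩ :=
    N.brg_cover TE TI hcover hdisj hacyc s m0 m' hseq m0 (fun _ => 0)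
      (fun u _ => rfl) (fun p => by simp)
  refine ⟨σ, ⟨mb', hpath⟩, hphi, ?_⟩
  intro u
  have := hcnt u
  simp only [PetriNet.parikh]
  omega
end
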